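/- Let k be a nonnegative integer, let α > -1 and let β > 0. Then ∫₀^∞ y^{α} e^{-y} L_k^{(α)}(y/β) dy = (Γ(α+1) (α+1)_k / k!) · ((β−1)/β)^k. -/

import Mathlib

open MeasureTheory Finset Real

/-- Pochhammer symbol `(a)_k = a (a+1) ⋯ (a+k-1)`. -/
noncomputable def poch (a : ℝ) (k : ℕ) : ℝ := ∏ i ∈ Finset.range k, (a + i)

/-- Generalized binomial coefficient `C(a, j) = (a-j+1)_j / j!`. -/
noncomputable def gbinom (a : ℝ) (j : ℕ) : ℝ := poch (a - j + 1) j / (j.factorial : ℝ)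

/-- Generalized Laguerre polynomial `L_n^{(α)}`. -/
noncomputable def Lag (α : ℝ) (n : ℕ) (x : ℝ) : ℝ :=
  ∑ i ∈ Finset.range (n + 1),
    ((-1 : ℝ) ^ i / (i.factorial : ℝ)) * gbinom ((n : ℝ) + α) (n - i) * x ^ i

/-- Physicists' Hermite polynomial `H_n`. -/
noncomputable def Herm (n : ℕ) (x : ℝ) : ℝ :=
  ∑ k ∈ Finset.range (n / 2 + 1),
    ((-1 : ℝ) ^ k * (n.factorial : ℝ) / ((k.factorial : ℝ) * ((n - 2 * k).factorial : ℝ))) *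
      (2 * x) ^ (n - 2 * k)

/-- Jacobi polynomial `P_n^{(α,γ)}`. -/
noncomputable def Jac (α γ : ℝ) (n : ℕ) (x : ℝ) : ℝ :=
  ∑ k ∈ Finset.range (n + 1),
    gbinom ((n : ℝ) + α) (n - k) * gbinom ((n : ℝ) + γ) k *
      ((x - 1) / 2) ^ k * ((x + 1) / 2) ^ (n - k)

/-- Terminating Lauricella function of type A. -/
noncomputable def lauricellaA {r : ℕ} (a : ℝ) (m : Fin r → ℕ) (c x : Fin r → ℝ) : ℝ :=
  ∑ j ∈ Fintype.piFinset (fun i => Finset.range (m i + 1)),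
    poch a (∑ i, j i) *
      ∏ i, (poch (-(m i : ℝ)) (j i) / (poch (c i) (j i) * ((j i).factorial : ℝ)) * x i ^ (j i))

/-- Terminating Gauss hypergeometric sum `₂F₁(-k, b; c; x)`. -/
noncomputable def hyp2F1 (k : ℕ) (b c x : ℝ) : ℝ :=
  ∑ j ∈ Finset.range (k + 1),
    poch (-(k : ℝ)) j * poch b j / (poch c j * (j.factorial : ℝ)) * x ^ j

/-- Terminating hypergeometric sum `₃F₂(-k, b₁, b₂; c₁, c₂; x)`. -/
noncomputable def hyp3F2 (k : ℕ) (b₁ b₂ c₁ c₂ x : ℝ) : ℝ :=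
  ∑ j ∈ Finset.range (k + 1),
    poch (-(k : ℝ)) j * poch b₁ j * poch b₂ j /
      (poch c₁ j * poch c₂ j * (j.factorial : ℝ)) * x ^ j

/-- Gauss hypergeometric series `₂F₁(a, b; c; x)` (a terminating series when `a` or `b`
is a nonpositive integer). -/
noncomputable def hypSum (a b c x : ℝ) : ℝ :=
  ∑' j : ℕ, poch a j * poch b j / (poch c j * (j.factorial : ℝ)) * x ^ j

/-- Terminating Appell function `F₂(a; -m₁, -m₂; c₁, c₂; x₁, x₂)`. -/
noncomputable def appellF2 (a : ℝ) (m₁ m₂ : ℕ) (c₁ c₂ x₁ x₂ : ℝ) : ℝ :=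
  ∑ j₁ ∈ Finset.range (m₁ + 1), ∑ j₂ ∈ Finset.range (m₂ + 1),
    poch a (j₁ + j₂) * poch (-(m₁ : ℝ)) j₁ * poch (-(m₂ : ℝ)) j₂ /
      (poch c₁ j₁ * poch c₂ j₂ * (j₁.factorial : ℝ) * (j₂.factorial : ℝ)) * x₁ ^ j₁ * x₂ ^ j₂

/-- `1/z!` with the convention that it vanishes for negative integers `z`. -/
noncomputable def invFacZ (z : ℤ) : ℝ := if 0 ≤ z then ((z.toNat.factorial : ℕ) : ℝ)⁻¹ else 0

/-- Pochhammer symbol extended to integer index via `(a)_k = Γ(a+k)/Γ(a)` for negative `k`. -/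
noncomputable def pochZ (a : ℝ) (k : ℤ) : ℝ :=
  if 0 ≤ k then poch a k.toNat else Real.Gamma (a + (k : ℝ)) / Real.Gamma a

/-! Expanding `L_k^{(α)}(y/β)` in powers of `y`, the `i`-th monomial integrates against
`y^α e^{-y}` to `Γ(α+1+i) / β^i = Γ(α+1) (α+1)_i / β^i`. Since `(α+1)_i (α+1+i)_{k-i} = (α+1)_k`,
that term is `Γ(α+1) (α+1)_k / k! · C(k,i) (-1/β)^i`, and the binomial theorem sums these to
`Γ(α+1) (α+1)_k / k! · (1 - 1/β)^k`. -/

lemma poch_succ (a : ℝ) (n : ℕ) : poch a (n + 1) = poch a n * (a + n) :=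
  prod_range_succ _ _

lemma poch_mul_poch_add (a : ℝ) (m n : ℕ) : poch a m * poch (a + m) n = poch a (m + n) := by
  simp only [poch, prod_range_add, Nat.cast_add, add_assoc]

lemma Gamma_add_nat_eq_mul_poch {a : ℝ} (ha : 0 < a) (n : ℕ) :
    Gamma (a + n) = Gamma a * poch a n := by
  induction n with
  | zero => simp [poch]
  | succ n ih =>
    rw [Nat.cast_succ, ← add_assoc, Gamma_add_one (by positivity : 0 < a + n).ne', ih, poch_succ]
    ring

lemma gbinom_nat_add_sub {i k : ℕ} (a : ℝ) (h : i ≤ k) :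
    gbinom (k + a) (k - i) = poch (a + 1 + i) (k - i) / ((k - i).factorial : ℝ) := by
  rw [gbinom, Nat.cast_sub h]
  ring_nf

lemma integral_rpow_mul_exp_neg_mul_sum_div_pow {α : ℝ} (hα : -1 < α) (β : ℝ) (s : Finset ℕ)
    (c : ℕ → ℝ) :
    ∫ y in Set.Ioi (0 : ℝ), y ^ α * exp (-y) * ∑ i ∈ s, c i * (y / β) ^ i =
      ∑ i ∈ s, c i * Gamma (α + 1 + i) / β ^ i := by
  have hpos (i : ℕ) : 0 < α + 1 + i := by linarith [(Nat.cast_nonneg i : (0 : ℝ) ≤ i)]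
  have hshift (i : ℕ) : α + 1 + i - 1 = α + i := by ring
  have hintegrand : ∀ y ∈ Set.Ioi (0 : ℝ), y ^ α * exp (-y) * ∑ i ∈ s, c i * (y / β) ^ i =
      ∑ i ∈ s, c i / β ^ i * (exp (-y) * y ^ (α + 1 + i - 1)) := by
    intro y hy
    simp only [mul_sum, hshift, rpow_add (Set.mem_Ioi.mp hy), rpow_natCast, div_pow]
    refine sum_congr rfl fun i _ => ?_
    ring
  rw [setIntegral_congr_fun measurableSet_Ioi hintegrand,
    integral_finsetSum _ fun i _ => (GammaIntegral_convergent (hpos i)).const_mul _]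
  refine sum_congr rfl fun i _ => ?_
  rw [integral_const_mul, ← Gamma_eq_integral (hpos i)]
  ring

noncomputable def lagCoeff (α : ℝ) (n i : ℕ) : ℝ :=
  (-1 : ℝ) ^ i / (i.factorial : ℝ) * gbinom ((n : ℝ) + α) (n - i)

lemma Lag_eq_sum_lagCoeff (α : ℝ) (n : ℕ) (x : ℝ) :
    Lag α n x = ∑ i ∈ range (n + 1), lagCoeff α n i * x ^ i :=
  rfl

lemma lagCoeff_mul_poch {i k : ℕ} (α : ℝ) (h : i ≤ k) :
    lagCoeff α k i * poch (α + 1) i =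
      poch (α + 1) k / (k.factorial : ℝ) * ((-1) ^ i * (k.choose i : ℝ)) := by
  obtain ⟨m, rfl⟩ := Nat.exists_eq_add_of_le h
  have hfac : ((i + m).choose i : ℝ) * (i.factorial : ℝ) * (m.factorial : ℝ) =
      (i + m).factorial := by
    have := Nat.choose_mul_factorial_mul_factorial h
    rw [Nat.add_sub_cancel_left] at this
    exact_mod_cast this
  rw [lagCoeff, gbinom_nat_add_sub α h, Nat.add_sub_cancel_left, ← hfac, ← poch_mul_poch_add]
  have := i.factorial_ne_zero
  have := m.factorial_ne_zero
  have := (Nat.choose_pos h).ne'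
  field_simp

/-- an integral of a single rescaled Laguerre polynomial against
the Laguerre weight. -/
theorem laguerre_rescaled_weight_integral (k : ℕ) (α β : ℝ) (hα : -1 < α) (hβ : 0 < β) :
    ∫ y in Set.Ioi (0 : ℝ), y ^ α * Real.exp (-y) * Lag α k (y / β) =
      (Real.Gamma (α + 1) * poch (α + 1) k / (k.factorial : ℝ)) * ((β - 1) / β) ^ k := by
  have hα1 : 0 < α + 1 := by linarith
  calc
    _ = ∑ i ∈ range (k + 1), lagCoeff α k i * Gamma (α + 1 + i) / β ^ i := by
      simp only [Lag_eq_sum_lagCoeff, integral_rpow_mul_exp_neg_mul_sum_div_pow hα]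
    _ = ∑ i ∈ range (k + 1), Gamma (α + 1) * poch (α + 1) k / (k.factorial : ℝ) *
          ((-β⁻¹) ^ i * 1 ^ (k - i) * (k.choose i : ℝ)) := by
      refine sum_congr rfl fun i hi => ?_
      rw [Gamma_add_nat_eq_mul_poch hα1, one_pow, mul_one, neg_pow β⁻¹, inv_pow]
      linear_combination (Gamma (α + 1) / β ^ i) *
        lagCoeff_mul_poch α (Nat.lt_succ_iff.mp (mem_range.mp hi))
    _ = _ := by
      rw [← mul_sum, ← add_pow, neg_add_eq_sub, ← one_div, one_sub_div hβ.ne']
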